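/- arXiv:1810.00808 — 2 statements merged into one kernel-verified Lean document; each statement's English description precedes it below -/
import Mathlib

section
/- Let f = x^d + Σ_{j=1}^d b_j x^{d-j} be a monic polynomial over C with roots ξ₁,…,ξ_d (with multiplicity), and let s_i = Σ_k ξ_k^i be the power sums. Define the generalized discriminants Δ_{d+1-l} = det(s_{i+j})_{0 ≤ i,j ≤ l-1} (the l×l Hankel determinant of power sums). Then f has exactly k distinct complex roots if and only if Δ₁ = ⋯ = Δ_{d-k} = 0 and Δ_{d-k+1} ≠ 0. -/
open Polynomial Matrix

private lemma hankel_factor {l : ℕ} (σ μ : Fin l → ℂ) (s : ℕ → ℂ)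
    (hsum : ∀ i : ℕ, s i = ∑ t, μ t * σ t ^ i) :
    (Matrix.of fun i j : Fin l => s ((i : ℕ) + (j : ℕ))).det
      = (∏ t, μ t) * (Matrix.vandermonde σ).det ^ 2 := by
  have hM : (Matrix.of fun i j : Fin l => s ((i : ℕ) + (j : ℕ)))
      = (Matrix.vandermonde σ)ᵀ * (Matrix.diagonal μ * Matrix.vandermonde σ) := by
    ext i j
    simp only [Matrix.of_apply, Matrix.mul_apply, Matrix.transpose_apply,
      Matrix.diagonal_mul, Matrix.vandermonde_apply, hsum]
    refine Finset.sum_congr rfl fun t _ => ?_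
    simp only [Matrix.diagonal_apply, ite_mul, zero_mul]
    have : (∑ x : Fin l, if t = x then μ t * σ x ^ (j : ℕ) else 0)
        = μ t * σ t ^ (j : ℕ) := by simp
    rw [this, pow_add]
    ring
  rw [hM, Matrix.det_mul, Matrix.det_mul, Matrix.det_transpose, Matrix.det_diagonal]
  ring

private lemma det_size_congr (s : ℕ → ℂ) {a b : ℕ} (h : a = b) :
    (Matrix.of fun i j : Fin a => s ((i : ℕ) + (j : ℕ))).det
      = (Matrix.of fun i j : Fin b => s ((i : ℕ) + (j : ℕ))).det := by
  subst h; rfl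

/-- Let `f` be a monic polynomial of degree `d` over ℂ with roots
`ξ₁,…,ξ_d` (with multiplicity), power sums `s_i = Σ_k ξ_k^i`, and generalized discriminants
`Δ_{d+1-l} = det (s_{i+j})_{0 ≤ i,j ≤ l-1}` (the `l×l` Hankel determinant of power sums).
Then `f` has exactly `k` distinct complex roots iff `Δ₁ = ⋯ = Δ_{d-k} = 0` and
`Δ_{d-k+1} ≠ 0`. -/
theorem statement8 {d k : ℕ} (hd : 0 < d) (hk : k ≤ d) (ξ : Fin d → ℂ)
    (f : Polynomial ℂ) (hf : f = ∏ i, (X - C (ξ i)))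
    (s : ℕ → ℂ) (hs : ∀ i, s i = ∑ j, ξ j ^ i)
    (Δ : ℕ → ℂ)
    (hΔ : ∀ m, Δ m =
      Matrix.det (Matrix.of fun i j : Fin (d + 1 - m) => s ((i : ℕ) + (j : ℕ)))) :
    (Finset.image ξ Finset.univ).card = k ↔
      (∀ m, 1 ≤ m → m ≤ d - k → Δ m = 0) ∧ Δ (d - k + 1) ≠ 0 := by
  classical
  set T : Finset ℂ := Finset.image ξ Finset.univ with hT
  set r : ℕ := T.card with hr
  have hrd : r ≤ d := by
    simpa using (Finset.card_image_le (s := (Finset.univ : Finset (Fin d))) (f := ξ))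
  set z : Fin r → ℂ := fun t => ((T.equivFin.symm t : T) : ℂ) with hzdef
  have hzinj : Function.Injective z := fun a b hab =>
    T.equivFin.symm.injective (Subtype.coe_injective hab)
  have hzT : ∀ t, z t ∈ T := fun t => (T.equivFin.symm t).2
  set m : Fin r → ℕ := fun t => (Finset.univ.filter fun j => ξ j = z t).card with hmdef
  have hmpos : ∀ t, 0 < m t := by
    intro t
    obtain ⟨j, -, hj⟩ := Finset.mem_image.mp (hzT t)
    exact Finset.card_pos.mpr ⟨j, by simp [hmdef, hj]⟩
  have hskey : ∀ i : ℕ, s i = ∑ t, (m t : ℂ) * z t ^ i := by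
    intro i
    rw [hs i]
    have h1 : ∑ j, ξ j ^ i
        = ∑ b ∈ T, ∑ j ∈ Finset.univ.filter fun j => ξ j = b, ξ j ^ i := by
      refine (Finset.sum_fiberwise_of_maps_to ?_ _).symm
      intro x _; exact Finset.mem_image_of_mem ξ (Finset.mem_univ x)
    have h2 : ∀ b ∈ T, (∑ j ∈ Finset.univ.filter fun j => ξ j = b, ξ j ^ i)
        = ((Finset.univ.filter fun j => ξ j = b).card : ℂ) * b ^ i := by
      intro b _
      rw [Finset.sum_congr rfl (fun j hj => by
        rw [(Finset.mem_filter.mp hj).2]), Finset.sum_const, nsmul_eq_mul]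
    rw [h1, Finset.sum_congr rfl h2,
      ← Finset.sum_attach T (fun b => (((Finset.univ.filter fun j => ξ j = b).card : ℂ)) * b ^ i)]
    exact (Fintype.sum_equiv T.equivFin.symm _ _ (fun t => rfl)).symm
  -- (A)
  have hA : (Matrix.of fun i j : Fin r => s ((i : ℕ) + (j : ℕ))).det ≠ 0 := by
    rw [hankel_factor z (fun t => (m t : ℂ)) s hskey]
    apply mul_ne_zero
    · exact Finset.prod_ne_zero_iff.mpr fun t _ => Nat.cast_ne_zero.mpr (hmpos t).ne'
    · apply pow_ne_zero
      rw [Matrix.det_vandermonde]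
      refine Finset.prod_ne_zero_iff.mpr fun i _ =>
        Finset.prod_ne_zero_iff.mpr fun j hj => ?_
      have hij : i < j := by simpa using hj
      exact sub_ne_zero.mpr fun h => absurd (hzinj h) hij.ne'
  -- (B)
  have hB : ∀ l : ℕ, r < l →
      (Matrix.of fun i j : Fin l => s ((i : ℕ) + (j : ℕ))).det = 0 := by
    intro l hrl
    set σ' : ℕ → ℂ := fun n => if h : n < r then z ⟨n, h⟩ else 0 with hσ'
    set μ' : ℕ → ℂ := fun n => if h : n < r then (m ⟨n, h⟩ : ℂ) else 0 with hμ'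
    have hsum : ∀ i : ℕ, s i = ∑ t : Fin l, μ' t * σ' t ^ i := by
      intro i
      have e1 : ∑ t : Fin l, μ' (t : ℕ) * σ' (t : ℕ) ^ i
          = ∑ n ∈ Finset.range l, μ' n * σ' n ^ i :=
        Fin.sum_univ_eq_sum_range (fun n => μ' n * σ' n ^ i) l
      have e2 : ∑ n ∈ Finset.range r, μ' n * σ' n ^ i
          = ∑ n ∈ Finset.range l, μ' n * σ' n ^ i := by
        refine Finset.sum_subset (Finset.range_subset_range.mpr hrl.le) fun n _ hn => ?_
        have : ¬ n < r := by simpa using hn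
        simp [hμ', this]
      have e3 : ∑ n ∈ Finset.range r, μ' n * σ' n ^ i
          = ∑ t : Fin r, (m t : ℂ) * z t ^ i := by
        rw [← Fin.sum_univ_eq_sum_range (fun n => μ' n * σ' n ^ i) r]
        refine Finset.sum_congr rfl fun t _ => ?_
        simp [hσ', hμ', t.2]
      rw [hskey i, e1, ← e2, e3]
    rw [hankel_factor (fun t : Fin l => σ' t) (fun t : Fin l => μ' t) s hsum]
    have : (∏ t : Fin l, μ' (t : ℕ)) = 0 := by
      refine Finset.prod_eq_zero (Finset.mem_univ (⟨r, hrl⟩ : Fin l)) ?_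
      simp [hμ']
    rw [this, zero_mul]
  -- conclusion
  constructor
  · intro hrk
    refine ⟨fun n h1 h2 => ?_, ?_⟩
    · rw [hΔ n]
      exact hB (d + 1 - n) (by omega)
    · rw [hΔ, det_size_congr s (show d + 1 - (d - k + 1) = r by omega)]
      exact hA
  · rintro ⟨h0, h1⟩
    by_contra hne
    rcases lt_or_gt_of_ne hne with hlt | hgt
    · apply h1
      rw [hΔ, det_size_congr s (show d + 1 - (d - k + 1) = k by omega)]
      exact hB k hlt
    · have := h0 (d + 1 - r) (by omega) (by omega)
      rw [hΔ, det_size_congr s (show d + 1 - (d + 1 - r) = r by omega)] at this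
      exact hA this
end

section
/- Let I ⊂ K[x₁,…,x_n] be an ideal generated by g₁,…,g_s, and let I' be the ideal generated by g'₁,…,g'_s obtained by replacing the coefficients g_{i,α} by g'_{i,α}, where the g'_{i,α} satisfy every polynomial relation over Q that the g_{i,α} satisfy and additionally H_i(g'_{i,α}) ≠ 0 for the finitely many rational functions H_i giving the leading coefficients of a Gröbner basis of I computed by Buchberger's algorithm. Then I and I' have the same ideal of leading terms with respect to the given monomial order, and hence K[x]/I and K[x]/I' have the same Hilbert–Samuel function. -/
/-!
Since `a` and `a'` satisfy the same polynomial relations over `ℚ`, both are images of one family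
of coefficients in a field `F` (the fraction field of `ℚ[X] ⧸ ker (aeval a)`) under two field
embeddings `F → K`. Both ideals are thus extensions `J · K[x]` of one ideal `J ⊆ F[x]`, and it
suffices that extending scalars along a field embedding `ι : F → K` does not change which
exponents are leading exponents of elements of `J` supported in a given set. Such an element is a
solution of linear conditions on coefficients, and a solution over `K` descends to one over `F`
by applying coefficientwise an `F`-linear retraction `K → F` of `ι`: being `F[x]`-linear, it maps
`J · K[x]` into `J`. The Hilbert–Samuel function is read off from the same data, since a space of
polynomials supported in a finite set has dimension equal to the number of leading exponents of
its elements.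
-/

section

variable {K : Type*} [Field K] [CharZero K] {n : ℕ} [LinearOrder (Fin n →₀ ℕ)]

/-- The ideal of leading terms of an ideal `I ⊆ K[x₁,…,x_n]` with respect to a given
(linear) monomial order on the exponents. -/
noncomputable def leadTermIdeal (I : Ideal (MvPolynomial (Fin n) K)) :
    Ideal (MvPolynomial (Fin n) K) :=
  Ideal.span {q | ∃ f ∈ I, f ≠ 0 ∧ ∃ m : Fin n →₀ ℕ,
    f.support.max = (m : WithBot (Fin n →₀ ℕ)) ∧
    q = MvPolynomial.monomial m (f.coeff m)}

/-- The Hilbert–Samuel function of `K[x]/I`: the dimension of the image of the space of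
polynomials of total degree at most `m` in the quotient `K[x]/I`. -/
noncomputable def hilbertSamuel (I : Ideal (MvPolynomial (Fin n) K)) (m : ℕ) : Cardinal :=
  Module.rank K ↥(Submodule.map (Ideal.Quotient.mkₐ K I).toLinearMap
    (MvPolynomial.restrictTotalDegree (Fin n) K m))

end

universe u

open MvPolynomial Module

theorem RingHom.exists_addMonoidHom_leftInverse {F K : Type*} [Field F] [Field K]
    (ι : F →+* K) : ∃ r : K →+ F, r 1 = 1 ∧ ∀ a c, r (ι a * c) = a * r c := by
  let := ι.toAlgebra
  obtain ⟨g, hg⟩ := (Algebra.linearMap F K).exists_leftInverse_of_injective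
    (LinearMap.ker_eq_bot.mpr ι.injective)
  refine ⟨g.toAddMonoidHom, ?_, fun a c => g.map_smul a c⟩
  simpa using LinearMap.congr_fun hg 1

theorem RingHom.exists_comp_eq_of_ker_eq {A : Type u} {K : Type*} [CommRing A] [Field K]
    (φ φ' : A →+* K) (h : RingHom.ker φ = RingHom.ker φ') :
    ∃ (F : Type u) (_ : Field F) (π : A →+* F) (e e' : F →+* K),
      e.comp π = φ ∧ e'.comp π = φ' := by
  have : (RingHom.ker φ).IsPrime := RingHom.ker_isPrime φ
  set F := FractionRing (A ⧸ RingHom.ker φ)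
  have hlift : ∀ ψ : A →+* K, RingHom.ker ψ = RingHom.ker φ →
      ∃ e : F →+* K, e.comp ((algebraMap _ F).comp (Ideal.Quotient.mk (RingHom.ker φ))) = ψ := by
    intro ψ hψ
    refine ⟨IsFractionRing.lift (K := F) (RingHom.lift_injective_of_ker_le_ideal _
      (fun a ha => by rwa [← hψ] at ha) hψ.le), ?_⟩
    ext x
    simp only [RingHom.comp_apply, IsFractionRing.lift_algebraMap]
    rfl
  obtain ⟨e, he⟩ := hlift φ rfl
  obtain ⟨e', he'⟩ := hlift φ' h.symm
  exact ⟨F, inferInstance, _, e, e', he, he'⟩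

namespace MvPolynomial

section CoefficientRetraction

variable {σ F K : Type*} [Field F] [Field K] {ι : F →+* K} {r : K →+ F}

theorem addMonoidAlgebraMap_mul_map (hr : ∀ a c, r (ι a * c) = a * r c)
    (h : MvPolynomial σ K) (p : MvPolynomial σ F) :
    (AddMonoidAlgebra.map r (h * map ι p) : MvPolynomial σ F) =
      AddMonoidAlgebra.map r h * p := by
  classical
  ext t
  change r (coeff t (h * map ι p)) = _
  simp only [coeff_mul, coeff_map, map_sum]
  refine Finset.sum_congr rfl fun x _ => ?_
  rw [mul_comm, hr, mul_comm]
  rfl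

theorem addMonoidAlgebraMap_mem_of_mem_map (hr : ∀ a c, r (ι a * c) = a * r c)
    {I : Ideal (MvPolynomial σ F)} {f : MvPolynomial σ K} (hf : f ∈ I.map (map ι)) :
    (AddMonoidAlgebra.map r f : MvPolynomial σ F) ∈ I := by
  suffices ∀ h, (AddMonoidAlgebra.map r (h * f) : MvPolynomial σ F) ∈ I by
    simpa using this 1
  induction hf using Submodule.span_induction with
  | mem f hf =>
    obtain ⟨p, hp, rfl⟩ := hf
    exact fun h => addMonoidAlgebraMap_mul_map hr h p ▸ I.mul_mem_left _ hp
  | zero => simp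
  | add f g _ _ hf hg =>
    intro h
    rw [mul_add, AddMonoidAlgebra.map_add]
    exact I.add_mem (hf h) (hg h)
  | smul c f _ hf =>
    intro h
    rw [smul_eq_mul, ← mul_assoc]
    exact hf (h * c)

variable (ι) in
theorem exists_mem_map_coeff_iff (I : Ideal (MvPolynomial σ F)) (μ : σ →₀ ℕ)
    (S : Set (σ →₀ ℕ)) :
    (∃ f ∈ I.map (map ι), coeff μ f = 1 ∧ ∀ t ∈ S, coeff t f = 0) ↔
      ∃ f ∈ I, coeff μ f = 1 ∧ ∀ t ∈ S, coeff t f = 0 := by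
  constructor
  · rintro ⟨f, hf, hμ, hS⟩
    obtain ⟨r, hr1, hr⟩ := ι.exists_addMonoidHom_leftInverse
    refine ⟨AddMonoidAlgebra.map r f, addMonoidAlgebraMap_mem_of_mem_map hr hf, ?_,
      fun t ht => ?_⟩
    · change r (coeff μ f) = 1
      rw [hμ, hr1]
    · change r (coeff t f) = 0
      rw [hS t ht, map_zero]
  · rintro ⟨f, hf, hμ, hS⟩
    exact ⟨map ι f, Ideal.mem_map_of_mem _ hf, by rw [coeff_map, hμ, map_one],
      fun t ht => by rw [coeff_map, hS t ht, map_zero]⟩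

end CoefficientRetraction

section LeadingExponents

/- `σ →₀ ℕ` carries the pointwise order as a global instance; these are switched off here so that
`<` and `≤` refer to the given monomial order. -/
attribute [-instance] Finsupp.instLE Finsupp.preorder Finsupp.partialorder
  Finsupp.semilatticeInf Finsupp.semilatticeSup Finsupp.lattice Finsupp.orderBot

variable {σ : Type*} [LinearOrder (σ →₀ ℕ)]

def leadingExponents {R : Type*} [CommSemiring R] (S : Set (MvPolynomial σ R)) :
    Set (σ →₀ ℕ) :=
  {μ | ∃ f ∈ S, f.support.max = μ}

theorem support_max_eq_iff {R : Type*} [CommSemiring R] {f : MvPolynomial σ R} {μ : σ →₀ ℕ} :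
    f.support.max = μ ↔ coeff μ f ≠ 0 ∧ ∀ t, μ < t → coeff t f = 0 := by
  constructor
  · intro h
    refine ⟨mem_support_iff.mp (Finset.mem_of_max h), fun t ht => ?_⟩
    by_contra hc
    have := Finset.le_max (mem_support_iff.mpr hc)
    rw [h, WithBot.coe_le_coe] at this
    exact this.not_gt ht
  · rintro ⟨hμ, hgt⟩
    refine le_antisymm (Finset.max_le fun t ht => WithBot.coe_le_coe.mpr ?_)
      (Finset.le_max (mem_support_iff.mpr hμ))
    exact not_lt.mp fun h => mem_support_iff.mp ht (hgt t h)

variable {L : Type*} [Field L]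

theorem mem_leadingExponents_inter_restrictSupport_iff (I : Ideal (MvPolynomial σ L))
    (s : Set (σ →₀ ℕ)) (μ : σ →₀ ℕ) :
    μ ∈ leadingExponents (↑I ∩ ↑(restrictSupport L s) : Set (MvPolynomial σ L)) ↔
      ∃ f ∈ I, coeff μ f = 1 ∧ ∀ t ∈ {t | μ < t ∨ t ∉ s}, coeff t f = 0 := by
  simp only [leadingExponents, Set.mem_ofPred_eq, Set.mem_inter_iff, SetLike.mem_coe,
    mem_restrictSupport_iff, support_max_eq_iff]
  constructor
  · rintro ⟨f, ⟨hfI, hfs⟩, hμ, hgt⟩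
    refine ⟨C (coeff μ f)⁻¹ * f, I.mul_mem_left _ hfI, by rw [coeff_C_mul, inv_mul_cancel₀ hμ], ?_⟩
    rintro t (ht | ht)
    · rw [coeff_C_mul, hgt t ht, mul_zero]
    · rw [coeff_C_mul, notMem_support_iff.mp fun h => ht (hfs h), mul_zero]
  · rintro ⟨f, hfI, hμ, hS⟩
    refine ⟨f, ⟨hfI, fun t ht => ?_⟩, by simp [hμ], fun t ht => hS t (Or.inl ht)⟩
    by_contra hts
    exact mem_support_iff.mp ht (hS t (Or.inr hts))

theorem leadingExponents_map_inter_restrictSupport {F K : Type*} [Field F] [Field K]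
    (ι : F →+* K) (I : Ideal (MvPolynomial σ F)) (s : Set (σ →₀ ℕ)) :
    leadingExponents (↑(I.map (map ι)) ∩ ↑(restrictSupport K s) : Set (MvPolynomial σ K)) =
      leadingExponents (↑I ∩ ↑(restrictSupport F s) : Set (MvPolynomial σ F)) := by
  ext μ
  rw [mem_leadingExponents_inter_restrictSupport_iff,
    mem_leadingExponents_inter_restrictSupport_iff, exists_mem_map_coeff_iff]

theorem leadingExponents_map {F K : Type*} [Field F] [Field K]
    (ι : F →+* K) (I : Ideal (MvPolynomial σ F)) :
    leadingExponents (I.map (map ι) : Set (MvPolynomial σ K)) =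
      leadingExponents (I : Set (MvPolynomial σ F)) := by
  simpa [restrictSupport_univ] using leadingExponents_map_inter_restrictSupport ι I Set.univ

theorem linearIndependent_of_injective_support_max {ι : Type*} {v : ι → MvPolynomial σ L}
    {d : ι → σ →₀ ℕ} (hd : Function.Injective d) (hv : ∀ i, (v i).support.max = d i) :
    LinearIndependent L v := by
  classical
  rw [linearIndependent_iff']
  intro s g hsum i hi
  by_contra hgi
  obtain ⟨j, hj, hmax⟩ := (s.filter (g · ≠ 0)).exists_max_image d ⟨i, by simp [hi, hgi]⟩
  rw [Finset.mem_filter] at hj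
  have htop : coeff (d j) (∑ k ∈ s, g k • v k) = g j * coeff (d j) (v j) := by
    rw [coeff_sum, Finset.sum_eq_single j _ fun h => absurd hj.1 h, coeff_smul, smul_eq_mul]
    intro k hk hkj
    by_cases hgk : g k = 0
    · rw [hgk, zero_smul, coeff_zero]
    · have hlt : d k < d j := (hmax k (by simp [hk, hgk])).lt_of_ne (hd.ne hkj)
      rw [coeff_smul, (support_max_eq_iff.mp (hv k)).2 _ hlt, smul_zero]
  rw [hsum, coeff_zero] at htop
  exact mul_ne_zero hj.2 (support_max_eq_iff.mp (hv j)).1 htop.symm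

theorem finrank_eq_ncard_leadingExponents {W : Submodule L (MvPolynomial σ L)}
    {s : Set (σ →₀ ℕ)} (hs : s.Finite) (hW : W ≤ restrictSupport L s) :
    finrank L W = (leadingExponents (W : Set (MvPolynomial σ L))).ncard := by
  have : Finite s := hs.to_subtype
  have : FiniteDimensional L (restrictSupport L s) := .of_basis (basisRestrictSupport L s)
  have : FiniteDimensional L W := Submodule.finiteDimensional_of_le hW
  set E := leadingExponents (W : Set (MvPolynomial σ L))
  have hE : E ⊆ s := by
    rintro μ ⟨f, hf, hμ⟩
    exact (mem_restrictSupport_iff L).mp (hW hf) (Finset.mem_of_max hμ)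
  have : Fintype E := (hs.subset hE).fintype
  rw [← Nat.card_coe_set_eq, Nat.card_eq_fintype_card]
  apply le_antisymm
  · let π : W →ₗ[L] (E → L) := LinearMap.pi fun μ => (lcoeff L μ.1).comp W.subtype
    have hπ : Function.Injective π := by
      rw [← LinearMap.ker_eq_bot, Submodule.eq_bot_iff]
      intro f hf
      by_contra hf0
      have hne : (f : MvPolynomial σ L).support.Nonempty :=
        support_nonempty.mpr fun h => hf0 (Subtype.ext h)
      obtain ⟨ν, hν⟩ := Finset.max_of_nonempty hne
      exact (support_max_eq_iff.mp hν).1 (congr_fun hf ⟨ν, f, f.2, hν⟩)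
    simpa using LinearMap.finrank_le_finrank_of_injective hπ
  · choose v hvW hv using fun μ : E => μ.2
    have hli : LinearIndependent L fun μ : E => (⟨v μ, hvW μ⟩ : W) :=
      .of_comp W.subtype (linearIndependent_of_injective_support_max Subtype.val_injective hv)
    exact hli.fintype_card_le_finrank

end LeadingExponents

end MvPolynomial

section LeadTermIdeal

variable {K : Type*} [Field K] {n : ℕ} [LinearOrder (Fin n →₀ ℕ)]

theorem leadTermIdeal_eq_span_leadingExponents (I : Ideal (MvPolynomial (Fin n) K)) :
    leadTermIdeal I =
      Ideal.span ((monomial · 1) '' leadingExponents (I : Set (MvPolynomial (Fin n) K))) := by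
  apply le_antisymm
  · rw [leadTermIdeal, Ideal.span_le]
    rintro q ⟨f, hf, -, μ, hμ, rfl⟩
    rw [← mul_one (coeff μ f), ← C_mul_monomial]
    exact Ideal.mul_mem_left _ _ (Ideal.subset_span ⟨μ, ⟨f, hf, hμ⟩, rfl⟩)
  · rw [Ideal.span_le]
    rintro q ⟨μ, ⟨f, hf, hμ⟩, rfl⟩
    have hc : coeff μ f ≠ 0 := mem_support_iff.mp (Finset.mem_of_max hμ)
    have hf0 : f ≠ 0 := by
      rintro rfl
      exact hc (coeff_zero μ)
    change monomial μ 1 ∈ leadTermIdeal I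
    rw [← inv_mul_cancel₀ hc, ← C_mul_monomial]
    exact Ideal.mul_mem_left _ _ (Ideal.subset_span ⟨f, hf, hf0, μ, hμ, rfl⟩)

theorem hilbertSamuel_eq_finrank_sub_ncard (I : Ideal (MvPolynomial (Fin n) K)) (m : ℕ) :
    hilbertSamuel I m = (finrank K (restrictTotalDegree (Fin n) K m) -
      (leadingExponents (↑I ∩ ↑(restrictTotalDegree (Fin n) K m) :
        Set (MvPolynomial (Fin n) K))).ncard : ℕ) := by
  set P := restrictTotalDegree (Fin n) K m
  set q := (Ideal.Quotient.mkₐ K I).toLinearMap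
  have hker : LinearMap.ker q = I.restrictScalars K := by
    ext f
    simp [q, Ideal.Quotient.eq_zero_iff_mem]
  have hkerP : finrank K (LinearMap.ker (q.domRestrict P)) =
      finrank K ↥(P ⊓ I.restrictScalars K) := by
    rw [LinearMap.ker_domRestrict, hker, ← Submodule.map_comap_subtype]
    exact (Submodule.equivMapOfInjective _ P.injective_subtype _).finrank_eq
  have hLE : finrank K ↥(P ⊓ I.restrictScalars K) =
      (leadingExponents (↑I ∩ ↑P : Set (MvPolynomial (Fin n) K))).ncard := by
    rw [finrank_eq_ncard_leadingExponents (W := P ⊓ I.restrictScalars K)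
      (s := {t | t.sum (fun _ e => e) ≤ m}) (Finsupp.finite_of_degree_le m) inf_le_left,
      Submodule.coe_inf, Set.inter_comm]
    rfl
  rw [hilbertSamuel, ← LinearMap.range_domRestrict, ← finrank_eq_rank,
    ← (q.domRestrict P).finrank_range_add_finrank_ker, hkerP, hLE, Nat.add_sub_cancel]

end LeadTermIdeal

section

variable {K : Type*} [Field K] [CharZero K] {n : ℕ} [LinearOrder (Fin n →₀ ℕ)]

theorem statement14_general {s : ℕ}
    (A : Finset (Fin n →₀ ℕ)) (a a' : Fin s × (Fin n →₀ ℕ) → K)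
    (hrel : ∀ f : MvPolynomial (Fin s × (Fin n →₀ ℕ)) ℚ,
      MvPolynomial.aeval a f = 0 ↔ MvPolynomial.aeval a' f = 0) :
    leadTermIdeal (Ideal.span (Set.range fun i : Fin s =>
        ∑ α ∈ A, MvPolynomial.monomial α (a (i, α)))) =
      leadTermIdeal (Ideal.span (Set.range fun i : Fin s =>
        ∑ α ∈ A, MvPolynomial.monomial α (a' (i, α)))) ∧
    ∀ m : ℕ,
      hilbertSamuel (Ideal.span (Set.range fun i : Fin s =>
        ∑ α ∈ A, MvPolynomial.monomial α (a (i, α)))) m =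
      hilbertSamuel (Ideal.span (Set.range fun i : Fin s =>
        ∑ α ∈ A, MvPolynomial.monomial α (a' (i, α)))) m := by
  obtain ⟨F, _, π, e, e', he, he'⟩ := RingHom.exists_comp_eq_of_ker_eq
    (aeval (R := ℚ) a).toRingHom (aeval (R := ℚ) a').toRingHom
    (Ideal.ext fun f => hrel f)
  set J : Ideal (MvPolynomial (Fin n) F) :=
    Ideal.span (Set.range fun i => ∑ α ∈ A, monomial α (π (X (i, α))))
  have hJ : ∀ (ε : F →+* K) (b : Fin s × (Fin n →₀ ℕ) → K), ε.comp π = (aeval b).toRingHom →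
      Ideal.span (Set.range fun i => ∑ α ∈ A, monomial α (b (i, α))) = J.map (map ε) := by
    intro ε b hε
    simp only [J, Ideal.map_span, ← Set.range_comp, Function.comp_def, map_sum, map_monomial,
      ← RingHom.comp_apply, hε, AlgHom.toRingHom_eq_coe, RingHom.coe_coe, aeval_X]
  rw [hJ e a he, hJ e' a' he']
  refine ⟨?_, fun m => ?_⟩
  · rw [leadTermIdeal_eq_span_leadingExponents, leadTermIdeal_eq_span_leadingExponents,
      leadingExponents_map, leadingExponents_map]
  · rw [hilbertSamuel_eq_finrank_sub_ncard, hilbertSamuel_eq_finrank_sub_ncard, restrictTotalDegree,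
      leadingExponents_map_inter_restrictSupport, leadingExponents_map_inter_restrictSupport]

/-- Let `I = (g₁,…,g_s)` and let `I' = (g'₁,…,g'_s)` be obtained by replacing
the coefficients `g_{i,α}` by new coefficients `g'_{i,α}` which satisfy exactly the same
polynomial relations over ℚ as the `g_{i,α}` (in particular every relation satisfied by the
`g_{i,α}` holds for the `g'_{i,α}`, and the finitely many nonvanishing conditions coming from
the leading coefficients in Buchberger's algorithm are preserved).  Then, for a given monomial
order (a linear order on exponents compatible with addition and with `0` least), `I` and `I'`
have the same ideal of leading terms, and hence the same Hilbert–Samuel function. -/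
theorem statement14 {s : ℕ}
    (hmono : ∀ a b c : Fin n →₀ ℕ, a ≤ b → a + c ≤ b + c)
    (hbot : ∀ a : Fin n →₀ ℕ, 0 ≤ a)
    (A : Finset (Fin n →₀ ℕ)) (a a' : Fin s × (Fin n →₀ ℕ) → K)
    (hrel : ∀ f : MvPolynomial (Fin s × (Fin n →₀ ℕ)) ℚ,
      MvPolynomial.aeval a f = 0 ↔ MvPolynomial.aeval a' f = 0) :
    leadTermIdeal (Ideal.span (Set.range fun i : Fin s =>
        ∑ α ∈ A, MvPolynomial.monomial α (a (i, α)))) =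
      leadTermIdeal (Ideal.span (Set.range fun i : Fin s =>
        ∑ α ∈ A, MvPolynomial.monomial α (a' (i, α)))) ∧
    ∀ m : ℕ,
      hilbertSamuel (Ideal.span (Set.range fun i : Fin s =>
        ∑ α ∈ A, MvPolynomial.monomial α (a (i, α)))) m =
      hilbertSamuel (Ideal.span (Set.range fun i : Fin s =>
        ∑ α ∈ A, MvPolynomial.monomial α (a' (i, α)))) m :=
  statement14_general A a a' hrel

end
end
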